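/- arXiv:2605.26067 — 5 statements merged into one kernel-verified Lean document; each statement's English description precedes it below -/
import Mathlib

section
/- Let X be a compact metric space, F = span{f_1,...,f_k} a finite-dimensional space of continuous functions, and K a symmetric continuous kernel on X×X. Then K is conditionally positive definite with respect to F (i.e., ∑ᵢⱼ αᵢαⱼK(xᵢ,xⱼ) ≥ 0 whenever ∑ᵢ αᵢf(xᵢ)=0 for all f ∈ F) if and only if for every finite signed Borel measure μ on X satisfying ∫ f dμ = 0 for all f ∈ F, we have ∬ K(x,y) dμ(x)dμ(y) ≥ 0. -/
/-! Points give measures: `∑ αᵢ K(xᵢ, xⱼ) αⱼ` is the energy of the pair of measures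
`∑ αᵢ⁺ δ_{xᵢ}`, `∑ αᵢ⁻ δ_{xᵢ}`. Conversely, for finitely supported measures the energy is such a
finite quadratic form, so it suffices to approximate a pair `μ, ν` with equal moments by finitely
supported pairs with equal moments. Pushing `μ, ν` forward along a measurable map `π` of finite
range with `dist (π x) x` small changes the energy and the moments by `O(ε)`, by uniform
continuity of `K` and of `Φ x = (f₁ x, …, f_k x)`. The moment defect lies in the span of the
range of `Φ`, so point masses at finitely many fixed points of total mass `O(ε)` cancel it (open
mapping theorem in finite dimension), at an energy cost of `O(ε)`. Letting `ε → 0` finishes. -/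

open MeasureTheory Set Filter Topology Submodule
open scoped NNReal

namespace KernelEnergy

variable {X ι E : Type*}

def CondPosDef (K : X → X → ℝ) (F : Submodule ℝ (X → ℝ)) : Prop :=
  ∀ (n : ℕ) (x : Fin n → X) (α : Fin n → ℝ),
    (∀ g ∈ F, ∑ i, α i * g (x i) = 0) → 0 ≤ ∑ i, ∑ j, α i * α j * K (x i) (x j)

theorem CondPosDef.sum_finset_nonneg {K : X → X → ℝ} {F : Submodule ℝ (X → ℝ)}
    (hK : CondPosDef K F) (s : Finset X) (α : X → ℝ) (h : ∀ g ∈ F, ∑ x ∈ s, α x * g x = 0) :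
    0 ≤ ∑ x ∈ s, ∑ y ∈ s, α x * α y * K x y := by
  set e := s.equivFin.symm
  have hsum (G : X → ℝ) : ∑ i, G (e i) = ∑ x ∈ s, G x :=
    (e.sum_comp (G ∘ (↑))).trans (s.sum_coe_sort G)
  simp only [← hsum]
  exact hK s.card (fun i => e i) (fun i => α (e i)) fun g hg => by
    simpa only [← hsum] using h g hg

variable [NormedAddCommGroup E]

theorem exists_sum_smul_eq_of_mem_span [NormedSpace ℝ E] [FiniteDimensional ℝ E] (Φ : X → E) :
    ∃ (n : ℕ) (y : Fin n → X) (L : ℝ), 0 ≤ L ∧ ∀ d ∈ span ℝ (range Φ),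
      ∃ β : Fin n → ℝ, ∑ l, β l • Φ (y l) = d ∧ ∑ l, |β l| ≤ L * ‖d‖ := by
  obtain ⟨v, hv, hspan, -⟩ := exists_fun_fin_finrank_span_eq ℝ (range Φ)
  choose y hy using hv
  set A := Fintype.linearCombination ℝ (Φ ∘ y)
  have hA : LinearMap.range A = span ℝ (range Φ) := by
    rw [Fintype.range_linearCombination, show Φ ∘ y = v from funext hy, hspan]
  obtain ⟨C, hC0, hC⟩ := (LinearMap.toContinuousLinearMap A.rangeRestrict).exists_preimage_norm_le
    A.surjective_rangeRestrict
  refine ⟨_, y, Module.finrank ℝ (span ℝ (range Φ)) * C, by positivity, fun d hd => ?_⟩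
  obtain ⟨β, hβ, hβC⟩ := hC ⟨d, by rwa [hA]⟩
  refine ⟨β, by simpa [A, Fintype.linearCombination_apply] using congrArg Subtype.val hβ, ?_⟩
  calc ∑ l, |β l| ≤ ∑ l, ‖β‖ := Finset.sum_le_sum fun l _ => norm_le_pi_norm β l
    _ ≤ _ := by
      rw [Finset.sum_const, Finset.card_univ, Fintype.card_fin, nsmul_eq_mul, mul_assoc]
      exact mul_le_mul_of_nonneg_left hβC (Nat.cast_nonneg _)

variable [MeasurableSpace X]

noncomputable def pairing (K : X → X → ℝ) (μ ν : Measure X) : ℝ := ∫ x, ∫ y, K x y ∂ν ∂μ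

/-- The `K`-energy of the signed measure `μ - ν`. -/
noncomputable def energy (K : X → X → ℝ) (μ ν : Measure X) : ℝ :=
  pairing K μ μ - pairing K μ ν - pairing K ν μ + pairing K ν ν

def HasFiniteSupport (μ : Measure X) : Prop := ∃ s : Finset X, μ (↑s)ᶜ = 0

theorem HasFiniteSupport.add {μ ν : Measure X} (hμ : HasFiniteSupport μ)
    (hν : HasFiniteSupport ν) : HasFiniteSupport (μ + ν) := by
  classical
  obtain ⟨s, hs⟩ := hμ
  obtain ⟨t, ht⟩ := hν
  refine ⟨s ∪ t, ?_⟩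
  simp only [Measure.coe_add, Pi.add_apply, Finset.coe_union, compl_union]
  rw [measure_mono_null inter_subset_left hs, measure_mono_null inter_subset_right ht, add_zero]

theorem abs_pairing_le {K : X → X → ℝ} {C : ℝ} (hC : ∀ x y, |K x y| ≤ C) (μ ν : Measure X)
    [IsFiniteMeasure μ] [IsFiniteMeasure ν] :
    |pairing K μ ν| ≤ C * ν.real univ * μ.real univ := by
  have hinner (x : X) : ‖∫ y, K x y ∂ν‖ ≤ C * ν.real univ :=
    norm_integral_le_of_norm_le_const (ae_of_all _ (hC x))
  exact norm_integral_le_of_norm_le_const (ae_of_all _ hinner)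

theorem measureReal_map_univ {π : X → X} (hπ : Measurable π) (μ : Measure X) :
    (μ.map π).real univ = μ.real univ := by
  simp [measureReal_def, Measure.map_apply hπ MeasurableSet.univ]

section FiniteSupport

variable [MeasurableSingletonClass X]

theorem hasFiniteSupport_map {π : X → X} (hπ : Measurable π) (hfin : (range π).Finite)
    (μ : Measure X) : HasFiniteSupport (μ.map π) :=
  ⟨hfin.toFinset, by simp [Measure.map_apply hπ hfin.measurableSet.compl]⟩

theorem hasFiniteSupport_sum_smul_dirac [Fintype ι] (c : ι → ℝ≥0) (x : ι → X) :
    HasFiniteSupport (∑ i, c i • Measure.dirac (x i)) := by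
  classical
  exact ⟨Finset.univ.image x, by simp⟩

theorem integral_eq_sum_of_measure_compl_eq_zero [NormedSpace ℝ E] [CompleteSpace E]
    {μ : Measure X} [IsFiniteMeasure μ] {s : Finset X} (hs : μ (↑s)ᶜ = 0) (g : X → E) :
    ∫ x, g x ∂μ = ∑ x ∈ s, μ.real {x} • g x := by
  rw [← setIntegral_finset s IntegrableOn.finset,
    Measure.restrict_eq_self_of_ae_mem (ae_iff.2 hs)]

theorem HasFiniteSupport.integral_mem_span [NormedSpace ℝ E] [CompleteSpace E] {μ : Measure X}
    [IsFiniteMeasure μ] (hμ : HasFiniteSupport μ) (Φ : X → E) :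
    ∫ x, Φ x ∂μ ∈ span ℝ (range Φ) := by
  obtain ⟨s, hs⟩ := hμ
  rw [integral_eq_sum_of_measure_compl_eq_zero hs]
  exact sum_mem fun x _ => smul_mem _ _ (subset_span (mem_range_self x))

theorem CondPosDef.energy_nonneg_of_hasFiniteSupport {K : X → X → ℝ} {k : ℕ}
    {f : Fin k → X → ℝ} (hK : CondPosDef K (span ℝ (range f))) {μ ν : Measure X}
    [IsFiniteMeasure μ] [IsFiniteMeasure ν] (hμ : HasFiniteSupport μ) (hν : HasFiniteSupport ν)
    (hμν : ∫ x, (fun j => f j x) ∂μ = ∫ x, (fun j => f j x) ∂ν) : 0 ≤ energy K μ ν := by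
  obtain ⟨s, hs⟩ := hμ.add hν
  obtain ⟨hμs, hνs⟩ := add_eq_zero.1 hs
  set α : X → ℝ := fun x => μ.real {x} - ν.real {x}
  have hαf (j : Fin k) : ∑ x ∈ s, α x * f j x = 0 := by
    have := congrFun hμν j
    rw [integral_eq_sum_of_measure_compl_eq_zero hμs,
      integral_eq_sum_of_measure_compl_eq_zero hνs] at this
    simpa [α, sub_mul, sub_eq_zero] using this
  let ℓ : (X → ℝ) →ₗ[ℝ] ℝ := ∑ x ∈ s, α x • LinearMap.proj x
  have hspan : span ℝ (range f) ≤ LinearMap.ker ℓ :=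
    span_le.2 (range_subset_iff.2 fun j => by simpa [ℓ] using hαf j)
  have henergy : energy K μ ν = ∑ x ∈ s, ∑ y ∈ s, α x * α y * K x y := by
    simp only [energy, pairing, integral_eq_sum_of_measure_compl_eq_zero hμs,
      integral_eq_sum_of_measure_compl_eq_zero hνs, smul_eq_mul, Finset.mul_sum,
      ← Finset.sum_sub_distrib, ← Finset.sum_add_distrib]
    refine Finset.sum_congr rfl fun x _ => Finset.sum_congr rfl fun y _ => ?_
    ring
  rw [henergy]
  exact hK.sum_finset_nonneg s α fun g hg => by simpa [ℓ] using hspan hg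

end FiniteSupport

section Dirac

variable [MeasurableSingletonClass X] [Fintype ι] [NormedSpace ℝ E] [FiniteDimensional ℝ E]

theorem integral_sum_smul_dirac (c : ι → ℝ≥0) (x : ι → X) (g : X → E) :
    ∫ y, g y ∂(∑ i, c i • Measure.dirac (x i)) = ∑ i, (c i : ℝ) • g (x i) := by
  simp_rw [ENNReal.smul_def, ← Measure.sum_fintype,
    integral_sum_dirac fun i => ENNReal.coe_ne_top, tsum_fintype]
  rfl

theorem pairing_sum_smul_dirac (K : X → X → ℝ) (a b : ι → ℝ≥0) (x : ι → X) :
    pairing K (∑ i, a i • Measure.dirac (x i)) (∑ i, b i • Measure.dirac (x i)) =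
      ∑ i, ∑ j, a i * b j * K (x i) (x j) := by
  simp only [pairing, integral_sum_smul_dirac, smul_eq_mul, Finset.mul_sum, mul_assoc]

/-- Together with `diracNeg β x`, this encodes the signed measure `∑ i, β i • δ (x i)`. -/
noncomputable def diracPos (β : ι → ℝ) (x : ι → X) : Measure X :=
  ∑ i, (β i).toNNReal • Measure.dirac (x i)

noncomputable def diracNeg (β : ι → ℝ) (x : ι → X) : Measure X :=
  ∑ i, (-β i).toNNReal • Measure.dirac (x i)

instance (β : ι → ℝ) (x : ι → X) : IsFiniteMeasure (diracPos β x) := by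
  unfold diracPos; infer_instance

instance (β : ι → ℝ) (x : ι → X) : IsFiniteMeasure (diracNeg β x) := by
  unfold diracNeg; infer_instance

theorem integral_diracPos_sub_integral_diracNeg (β : ι → ℝ) (x : ι → X) (g : X → E) :
    ∫ y, g y ∂diracPos β x - ∫ y, g y ∂diracNeg β x = ∑ i, β i • g (x i) := by
  simp only [diracPos, diracNeg, integral_sum_smul_dirac, ← Finset.sum_sub_distrib, ← sub_smul,
    Real.coe_toNNReal', max_zero_sub_max_neg_zero_eq_self]

theorem measureReal_univ_diracPos_add_diracNeg (β : ι → ℝ) (x : ι → X) :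
    (diracPos β x).real univ + (diracNeg β x).real univ = ∑ i, |β i| := by
  have h (μ : Measure X) : μ.real univ = ∫ _, (1 : ℝ) ∂μ := by simp
  rw [h, h]
  simp only [diracPos, diracNeg, integral_sum_smul_dirac, ← Finset.sum_add_distrib,
    Real.coe_toNNReal', max_zero_add_max_neg_zero_eq_abs_self, smul_eq_mul, mul_one]

theorem energy_diracPos_diracNeg (K : X → X → ℝ) (β : ι → ℝ) (x : ι → X) :
    energy K (diracPos β x) (diracNeg β x) = ∑ i, ∑ j, β i * β j * K (x i) (x j) := by
  simp only [energy, diracPos, diracNeg, pairing_sum_smul_dirac, ← Finset.sum_sub_distrib,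
    ← Finset.sum_add_distrib]
  refine Finset.sum_congr rfl fun i _ => Finset.sum_congr rfl fun j _ => ?_
  conv_rhs => rw [← max_zero_sub_max_neg_zero_eq_self (β i),
    ← max_zero_sub_max_neg_zero_eq_self (β j)]
  simp only [Real.coe_toNNReal']
  ring

theorem CondPosDef.of_energy_nonneg {K : X → X → ℝ} {F : Submodule ℝ (X → ℝ)}
    (h : ∀ μ ν : Measure X, IsFiniteMeasure μ → IsFiniteMeasure ν →
      (∀ g ∈ F, ∫ x, g x ∂μ - ∫ x, g x ∂ν = 0) → 0 ≤ energy K μ ν) :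
    CondPosDef K F := by
  intro n x α hα
  rw [← energy_diracPos_diracNeg]
  refine h _ _ inferInstance inferInstance fun g hg => ?_
  simpa only [integral_diracPos_sub_integral_diracNeg, smul_eq_mul] using hα g hg

end Dirac

theorem exists_moment_correction [MeasurableSingletonClass X] [NormedSpace ℝ E]
    [FiniteDimensional ℝ E] (Φ : X → E) :
    ∃ L : ℝ, 0 ≤ L ∧ ∀ d ∈ span ℝ (range Φ), ∃ τ₁ τ₂ : Measure X,
      IsFiniteMeasure τ₁ ∧ IsFiniteMeasure τ₂ ∧ HasFiniteSupport τ₁ ∧ HasFiniteSupport τ₂ ∧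
      ∫ x, Φ x ∂τ₁ - ∫ x, Φ x ∂τ₂ = d ∧ τ₁.real univ + τ₂.real univ ≤ L * ‖d‖ := by
  obtain ⟨n, y, L, hL0, hL⟩ := exists_sum_smul_eq_of_mem_span Φ
  refine ⟨L, hL0, fun d hd => ?_⟩
  obtain ⟨β, hβ, hβL⟩ := hL d hd
  exact ⟨diracPos β y, diracNeg β y, inferInstance, inferInstance,
    hasFiniteSupport_sum_smul_dirac _ _, hasFiniteSupport_sum_smul_dirac _ _,
    by rw [integral_diracPos_sub_integral_diracNeg, hβ],
    by rw [measureReal_univ_diracPos_add_diracNeg]; exact hβL⟩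

section Compact

variable [MetricSpace X] [CompactSpace X] [BorelSpace X] {K : X → X → ℝ}

theorem integrable_of_continuous {g : X → E} (hg : Continuous g) (μ : Measure X)
    [IsFiniteMeasure μ] : Integrable g μ :=
  hg.integrable_of_hasCompactSupport (.of_compactSpace g)

theorem continuous_integral_right (hK : Continuous K.uncurry) (ν : Measure X) [IsFiniteMeasure ν] :
    Continuous fun x => ∫ y, K x y ∂ν := by
  simpa using continuous_parametric_integral_of_continuous (μ := ν) hK isCompact_univ

theorem pairing_add_left (hK : Continuous K.uncurry) (μ₁ μ₂ ν : Measure X) [IsFiniteMeasure μ₁]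
    [IsFiniteMeasure μ₂] [IsFiniteMeasure ν] :
    pairing K (μ₁ + μ₂) ν = pairing K μ₁ ν + pairing K μ₂ ν :=
  integral_add_measure (integrable_of_continuous (continuous_integral_right hK ν) μ₁)
    (integrable_of_continuous (continuous_integral_right hK ν) μ₂)

theorem pairing_add_right (hK : Continuous K.uncurry) (μ ν₁ ν₂ : Measure X) [IsFiniteMeasure μ]
    [IsFiniteMeasure ν₁] [IsFiniteMeasure ν₂] :
    pairing K μ (ν₁ + ν₂) = pairing K μ ν₁ + pairing K μ ν₂ := by
  have hKx (x : X) : Continuous (K x) := hK.comp (Continuous.prodMk_right x)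
  simp only [pairing]
  rw [← integral_add (integrable_of_continuous (continuous_integral_right hK ν₁) μ)
    (integrable_of_continuous (continuous_integral_right hK ν₂) μ)]
  congr 1 with x
  exact integral_add_measure (integrable_of_continuous (hKx x) ν₁)
    (integrable_of_continuous (hKx x) ν₂)

theorem abs_energy_add_sub_le (hK : Continuous K.uncurry) {C : ℝ} (hC : ∀ x y, |K x y| ≤ C)
    (μ ν σ τ : Measure X) [IsFiniteMeasure μ] [IsFiniteMeasure ν] [IsFiniteMeasure σ]
    [IsFiniteMeasure τ] :
    |energy K (μ + σ) (ν + τ) - energy K μ ν| ≤ C * (σ.real univ + τ.real univ) *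
      (2 * (μ.real univ + ν.real univ) + σ.real univ + τ.real univ) := by
  simp only [energy, pairing_add_left hK, pairing_add_right hK]
  have h (ρ ρ' : Measure X) [IsFiniteMeasure ρ] [IsFiniteMeasure ρ'] :=
    abs_le.1 (abs_pairing_le hC ρ ρ')
  rw [abs_le]
  constructor <;>
  linarith [h μ σ, h μ τ, h ν σ, h ν τ, h σ μ, h σ ν, h τ μ, h τ ν, h σ σ, h σ τ, h τ σ, h τ τ]

theorem norm_integral_map_sub_le [NormedSpace ℝ E] {g : X → E} (hg : Continuous g) {π : X → X}
    (hπ : Measurable π) (μ : Measure X) [IsFiniteMeasure μ] {ε : ℝ}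
    (h : ∀ x, ‖g (π x) - g x‖ ≤ ε) :
    ‖∫ x, g x ∂μ.map π - ∫ x, g x ∂μ‖ ≤ ε * μ.real univ := by
  have hgπ : Integrable (fun x => g (π x)) μ :=
    (integrable_map_measure hg.aestronglyMeasurable hπ.aemeasurable).1
      (integrable_of_continuous hg _)
  rw [integral_map hπ.aemeasurable hg.aestronglyMeasurable,
    ← integral_sub hgπ (integrable_of_continuous hg μ)]
  exact norm_integral_le_of_norm_le_const (ae_of_all _ h)

theorem abs_pairing_map_sub_le (hK : Continuous K.uncurry) {π : X → X} (hπ : Measurable π)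
    (μ ν : Measure X) [IsFiniteMeasure μ] [IsFiniteMeasure ν] {ε : ℝ}
    (hleft : ∀ x y, |K (π x) y - K x y| ≤ ε) (hright : ∀ x y, |K x (π y) - K x y| ≤ ε) :
    |pairing K (μ.map π) (ν.map π) - pairing K μ ν| ≤ 2 * ε * ν.real univ * μ.real univ := by
  have hKx (x : X) : Continuous (K x) := hK.comp (Continuous.prodMk_right x)
  have hmoveleft : |pairing K (μ.map π) (ν.map π) - pairing K μ (ν.map π)| ≤
      ε * ν.real univ * μ.real univ := by
    refine norm_integral_map_sub_le (continuous_integral_right hK _) hπ μ fun x => ?_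
    rw [← integral_sub (integrable_of_continuous (hKx _) _) (integrable_of_continuous (hKx _) _),
      ← measureReal_map_univ hπ ν]
    exact norm_integral_le_of_norm_le_const (ae_of_all _ fun y => hleft x y)
  have hmoveright : |pairing K μ (ν.map π) - pairing K μ ν| ≤ ε * ν.real univ * μ.real univ := by
    rw [pairing, pairing,
      ← integral_sub (integrable_of_continuous (continuous_integral_right hK _) μ)
        (integrable_of_continuous (continuous_integral_right hK _) μ)]
    exact norm_integral_le_of_norm_le_const (ae_of_all _ fun x =>
      norm_integral_map_sub_le (hKx x) hπ ν fun y => hright x y)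
  calc _ ≤ |pairing K (μ.map π) (ν.map π) - pairing K μ (ν.map π)|
        + |pairing K μ (ν.map π) - pairing K μ ν| := abs_sub_le _ _ _
    _ ≤ _ := by linarith

theorem abs_energy_map_sub_le (hK : Continuous K.uncurry) {π : X → X} (hπ : Measurable π)
    (μ ν : Measure X) [IsFiniteMeasure μ] [IsFiniteMeasure ν] {ε : ℝ}
    (hleft : ∀ x y, |K (π x) y - K x y| ≤ ε) (hright : ∀ x y, |K x (π y) - K x y| ≤ ε) :
    |energy K (μ.map π) (ν.map π) - energy K μ ν| ≤
      2 * ε * (μ.real univ + ν.real univ) ^ 2 := by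
  have h (ρ ρ' : Measure X) [IsFiniteMeasure ρ] [IsFiniteMeasure ρ'] :=
    abs_le.1 (abs_pairing_map_sub_le hK hπ ρ ρ' hleft hright)
  simp only [energy]
  rw [abs_le]
  constructor <;> nlinarith [h μ μ, h μ ν, h ν μ, h ν ν]

theorem exists_measurable_finite_range_dist_lt {δ : ℝ} (hδ : 0 < δ) :
    ∃ π : X → X, Measurable π ∧ (range π).Finite ∧ ∀ x, dist (π x) x < δ := by
  rcases isEmpty_or_nonempty X with hX | hX
  · exact ⟨id, measurable_id, finite_range id, isEmptyElim⟩
  open TopologicalSpace in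
  obtain ⟨t, ht⟩ := isCompact_univ.elim_finite_subcover (fun n => Metric.ball (denseSeq X n) δ)
    (fun _ => Metric.isOpen_ball)
    (fun x _ => mem_iUnion.2 ((denseRange_denseSeq X).exists_dist_lt x hδ))
  refine ⟨SimpleFunc.nearestPt (denseSeq X) (t.sup id), SimpleFunc.measurable _,
    SimpleFunc.finite_range _, fun x => ?_⟩
  obtain ⟨n, hn, hx⟩ := mem_iUnion₂.1 (ht (mem_univ x))
  have := SimpleFunc.edist_nearestPt_le (denseSeq X) x (Finset.le_sup (f := id) hn)
  rw [edist_dist, edist_dist, ENNReal.ofReal_le_ofReal_iff dist_nonneg] at this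
  exact this.trans_lt (Metric.mem_ball'.1 hx)

theorem exists_measurable_finite_range_approx (hK : Continuous K.uncurry) {Φ : X → E}
    (hΦ : Continuous Φ) {ε : ℝ} (hε : 0 < ε) :
    ∃ π : X → X, Measurable π ∧ (range π).Finite ∧ (∀ x y, |K (π x) y - K x y| ≤ ε) ∧
      (∀ x y, |K x (π y) - K x y| ≤ ε) ∧ ∀ x, ‖Φ (π x) - Φ x‖ ≤ ε := by
  obtain ⟨δK, hδK, hK'⟩ := Metric.uniformContinuous_iff.1
    (CompactSpace.uniformContinuous_of_continuous hK) ε hε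
  obtain ⟨δΦ, hδΦ, hΦ'⟩ := Metric.uniformContinuous_iff.1
    (CompactSpace.uniformContinuous_of_continuous hΦ) ε hε
  obtain ⟨π, hπ, hfin, hπδ⟩ := exists_measurable_finite_range_dist_lt (X := X) (lt_min hδK hδΦ)
  refine ⟨π, hπ, hfin, fun x y => ?_, fun x y => ?_, fun x => ?_⟩
  · refine (hK' (a := (π x, y)) (b := (x, y)) ?_).le
    simpa [Prod.dist_eq] using (hπδ x).trans_le (min_le_left _ _)
  · refine (hK' (a := (x, π y)) (b := (x, y)) ?_).le
    simpa [Prod.dist_eq] using (hπδ y).trans_le (min_le_left _ _)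
  · rw [← dist_eq_norm]
    exact (hΦ' ((hπδ x).trans_le (min_le_right _ _))).le

variable [NormedSpace ℝ E] [FiniteDimensional ℝ E]

theorem exists_neg_le_energy_of_integral_eq (hK : Continuous K.uncurry) {Φ : X → E}
    (hΦ : Continuous Φ)
    (hfin : ∀ μ ν : Measure X, IsFiniteMeasure μ → IsFiniteMeasure ν → HasFiniteSupport μ →
      HasFiniteSupport ν → ∫ x, Φ x ∂μ = ∫ x, Φ x ∂ν → 0 ≤ energy K μ ν)
    (μ ν : Measure X) [IsFiniteMeasure μ] [IsFiniteMeasure ν]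
    (hμν : ∫ x, Φ x ∂μ = ∫ x, Φ x ∂ν) :
    ∃ a b : ℝ, ∀ ε > 0, -(a * ε + b * ε ^ 2) ≤ energy K μ ν := by
  obtain ⟨C₀, hC₀⟩ := isCompact_univ.exists_bound_of_continuousOn hK.continuousOn
  set C := max C₀ 0
  have hC (x y : X) : |K x y| ≤ C := (hC₀ (x, y) trivial).trans (le_max_left _ _)
  obtain ⟨L, hL0, hL⟩ := exists_moment_correction Φ
  set M := μ.real univ + ν.real univ
  refine ⟨2 * M ^ 2 + 2 * C * L * M ^ 2, C * L ^ 2 * M ^ 2, fun ε hε => ?_⟩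
  obtain ⟨π, hπ, hπfin, hleft, hright, hΦπ⟩ := exists_measurable_finite_range_approx hK hΦ hε
  have hdisc := abs_energy_map_sub_le hK hπ μ ν hleft hright
  have hmoment : ‖∫ x, Φ x ∂ν.map π - ∫ x, Φ x ∂μ.map π‖ ≤ ε * M := by
    have hμ := norm_integral_map_sub_le hΦ hπ μ hΦπ
    have hν := norm_integral_map_sub_le hΦ hπ ν hΦπ
    calc _ = ‖(∫ x, Φ x ∂ν.map π - ∫ x, Φ x ∂ν) - (∫ x, Φ x ∂μ.map π - ∫ x, Φ x ∂μ)‖ := by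
          rw [hμν]; abel_nf
      _ ≤ _ := (norm_sub_le _ _).trans (by simp only [M]; linarith)
  have hsuppμ := hasFiniteSupport_map hπ hπfin μ
  have hsuppν := hasFiniteSupport_map hπ hπfin ν
  obtain ⟨τ₁, τ₂, _, _, hτ₁, hτ₂, hτ, hτL⟩ :=
    hL _ (sub_mem (hsuppν.integral_mem_span Φ) (hsuppμ.integral_mem_span Φ))
  have hpos := hfin (μ.map π + τ₁) (ν.map π + τ₂) inferInstance inferInstance
    (hsuppμ.add hτ₁) (hsuppν.add hτ₂) (by
      rw [integral_add_measure (integrable_of_continuous hΦ _) (integrable_of_continuous hΦ _),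
        integral_add_measure (integrable_of_continuous hΦ _) (integrable_of_continuous hΦ _),
        sub_eq_iff_eq_add.1 hτ]
      abel)
  have hcorr := abs_energy_add_sub_le hK hC (μ.map π) (ν.map π) τ₁ τ₂
  rw [measureReal_map_univ hπ, measureReal_map_univ hπ] at hcorr
  have hT : τ₁.real univ + τ₂.real univ ≤ L * (ε * M) :=
    hτL.trans (mul_le_mul_of_nonneg_left hmoment hL0)
  have hcost : C * (τ₁.real univ + τ₂.real univ) * (2 * M + τ₁.real univ + τ₂.real univ)
      ≤ C * (L * (ε * M)) * (2 * M + L * (ε * M)) := by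
    rw [add_assoc (2 * M)]
    gcongr
  linarith [abs_le.1 hdisc, abs_le.1 hcorr]

theorem energy_nonneg_of_integral_eq (hK : Continuous K.uncurry) {Φ : X → E} (hΦ : Continuous Φ)
    (hfin : ∀ μ ν : Measure X, IsFiniteMeasure μ → IsFiniteMeasure ν → HasFiniteSupport μ →
      HasFiniteSupport ν → ∫ x, Φ x ∂μ = ∫ x, Φ x ∂ν → 0 ≤ energy K μ ν)
    (μ ν : Measure X) [IsFiniteMeasure μ] [IsFiniteMeasure ν]
    (hμν : ∫ x, Φ x ∂μ = ∫ x, Φ x ∂ν) : 0 ≤ energy K μ ν := by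
  obtain ⟨a, b, h⟩ := exists_neg_le_energy_of_integral_eq hK hΦ hfin μ ν hμν
  have hlim : Tendsto (fun ε : ℝ => -(a * ε + b * ε ^ 2)) (𝓝[>] 0) (𝓝 0) := by
    have : Continuous fun ε : ℝ => -(a * ε + b * ε ^ 2) := by fun_prop
    simpa using this.continuousWithinAt.tendsto (s := Ioi 0) (x := 0)
  exact le_of_tendsto hlim (eventually_nhdsWithin_of_forall h)

end Compact

end KernelEnergy

open KernelEnergy

theorem cpd_iff_signed_measure_general
    {X : Type*} [MetricSpace X] [CompactSpace X] [MeasurableSpace X] [BorelSpace X]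
    {k : ℕ} (f : Fin k → X → ℝ) (hfc : ∀ i, Continuous (f i))
    (K : X → X → ℝ)
    (hKcont : Continuous fun p : X × X => K p.1 p.2) :
    (∀ (n : ℕ) (x : Fin n → X) (α : Fin n → ℝ),
        (∀ g ∈ Submodule.span ℝ (Set.range f), ∑ i, α i * g (x i) = 0) →
        0 ≤ ∑ i, ∑ j, α i * α j * K (x i) (x j))
      ↔
    (∀ (μ ν : Measure X), IsFiniteMeasure μ → IsFiniteMeasure ν →
        (∀ g ∈ Submodule.span ℝ (Set.range f),
          (∫ x, g x ∂μ) - (∫ x, g x ∂ν) = 0) →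
        0 ≤ (∫ x, ∫ y, K x y ∂μ ∂μ) - (∫ x, ∫ y, K x y ∂ν ∂μ)
            - (∫ x, ∫ y, K x y ∂μ ∂ν) + (∫ x, ∫ y, K x y ∂ν ∂ν)) := by
  refine ⟨fun hK μ ν _ _ hμν => ?_, CondPosDef.of_energy_nonneg⟩
  have hΦ : Continuous fun x j => f j x := continuous_pi hfc
  have hcoord (ρ : Measure X) [IsFiniteMeasure ρ] (j : Fin k) :
      (∫ x, (fun j => f j x) ∂ρ) j = ∫ x, f j x ∂ρ :=
    ((ContinuousLinearMap.proj (R := ℝ) (φ := fun _ : Fin k => ℝ) j).integral_comp_comm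
      (integrable_of_continuous hΦ ρ)).symm
  refine energy_nonneg_of_integral_eq hKcont hΦ
    (fun μ ν _ _ hμ hν => CondPosDef.energy_nonneg_of_hasFiniteSupport hK hμ hν) μ ν ?_
  funext j
  rw [hcoord, hcoord]
  exact sub_eq_zero.1 (hμν _ (Submodule.subset_span ⟨j, rfl⟩))

/-- A symmetric continuous kernel on a compact metric space is
conditionally positive definite w.r.t. `F = span{f_1,…,f_k}` iff for every finite
signed Borel measure (encoded by its Jordan decomposition `μ - ν` into finite
measures) annihilating `F`, the double integral of `K` is nonnegative. -/
theorem cpd_iff_signed_measure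
    {X : Type*} [MetricSpace X] [CompactSpace X] [MeasurableSpace X] [BorelSpace X]
    {k : ℕ} (f : Fin k → X → ℝ) (hfc : ∀ i, Continuous (f i))
    (hli : LinearIndependent ℝ f)
    (K : X → X → ℝ) (hKsymm : ∀ x y, K x y = K y x)
    (hKcont : Continuous fun p : X × X => K p.1 p.2) :
    (∀ (n : ℕ) (x : Fin n → X) (α : Fin n → ℝ),
        (∀ g ∈ Submodule.span ℝ (Set.range f), ∑ i, α i * g (x i) = 0) →
        0 ≤ ∑ i, ∑ j, α i * α j * K (x i) (x j))
      ↔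
    (∀ (μ ν : Measure X), IsFiniteMeasure μ → IsFiniteMeasure ν →
        (∀ g ∈ Submodule.span ℝ (Set.range f),
          (∫ x, g x ∂μ) - (∫ x, g x ∂ν) = 0) →
        0 ≤ (∫ x, ∫ y, K x y ∂μ ∂μ) - (∫ x, ∫ y, K x y ∂ν ∂μ)
            - (∫ x, ∫ y, K x y ∂μ ∂ν) + (∫ x, ∫ y, K x y ∂ν ∂ν)) :=
  cpd_iff_signed_measure_general f hfc K hKcont
end

section
/- Let K be a symmetric continuous kernel on compact X that is conditionally positive definite w.r.t. F = span{f_1,...,f_k}, let P be an F-nondegenerate Borel probability measure on X with residual kernel K_P, and let μ be a finite signed Borel measure on X. Define a signed measure ν = (I−Π_P)*μ by ∫ f dν = ∫ (I−Π_P)f dμ for all continuous f. Then ∬ K_P(x,y) dμ(x)dμ(y) = ∬ K(x,y) dν(x)dν(y), and moreover ∫ f dν = 0 for all f ∈ F. -/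
/-!
Write `T = I − Π_P`. Applying the defining property of `ν = T*μ` to `y ↦ K(x, y)` gives
`∫ K(x, ·) dν = ∫ (T K(x, ·)) dμ`, a continuous function of `x`; applying it once more gives
`∬ K dν dν = ∫ T_x (∫ T_y K(x, y) dμ(y)) dμ(x)`. By Fubini, `T` acting in `x` commutes with the
`μ`-integral in `y`, which turns the integrand into `(T ⊗ T) K = K_P`. Finally `Π_P` reproduces
`F` because its kernel is built from the inverse Gram matrix, so `T` kills `F` and `ν` annihilates it.
-/

open MeasureTheory Function

noncomputable section

/-- `I − Π_P`, where `Π_P` is the integral operator with kernel `Pk` against `P`. -/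
def projCompl {Y : Type*} [MeasurableSpace Y] (P : Measure Y) (Pk : Y → Y → ℝ) (g : Y → ℝ)
    (x : Y) : ℝ :=
  g x - ∫ y, Pk x y * g y ∂P

def residualKernel {Y : Type*} [MeasurableSpace Y] (P : Measure Y) (Pk K : Y → Y → ℝ)
    (x y : Y) : ℝ :=
  projCompl P Pk (fun s => projCompl P Pk (K s) y) x

/-- Integration against the signed measure `μ₁ − μ₂`. -/
def signedIntegral {Y : Type*} [MeasurableSpace Y] (μ₁ μ₂ : Measure Y) (g : Y → ℝ) : ℝ :=
  ∫ x, g x ∂μ₁ - ∫ x, g x ∂μ₂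

end

section Compact

theorem Continuous.integrable_of_compactSpace {Y : Type*} [TopologicalSpace Y] [CompactSpace Y]
    [MeasurableSpace Y] [OpensMeasurableSpace Y] {g : Y → ℝ} (hg : Continuous g) (μ : Measure Y)
    [IsFiniteMeasure μ] : Integrable g μ :=
  hg.integrable_of_hasCompactSupport (.of_compactSpace g)

theorem continuous_integral_of_continuous_uncurry {Y Z : Type*} [TopologicalSpace Y]
    [CompactSpace Y] [MeasurableSpace Y] [OpensMeasurableSpace Y] [TopologicalSpace Z]
    [LocallyCompactSpace Z] [FirstCountableTopology Z] {H : Z → Y → ℝ}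
    (hH : Continuous (uncurry H)) (μ : Measure Y) [IsFiniteMeasure μ] :
    Continuous fun z => ∫ y, H z y ∂μ := by
  simpa using continuous_parametric_integral_of_continuous (μ := μ) hH isCompact_univ

variable {Y : Type*} [TopologicalSpace Y] [CompactSpace Y] [T2Space Y]
  [SecondCountableTopology Y] [MeasurableSpace Y] [OpensMeasurableSpace Y]

theorem continuous_signedIntegral_of_continuous_uncurry {H : Y → Y → ℝ}
    (hH : Continuous (uncurry H)) (μ₁ μ₂ : Measure Y) [IsFiniteMeasure μ₁] [IsFiniteMeasure μ₂] :
    Continuous fun x => signedIntegral μ₁ μ₂ (H x) :=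
  (continuous_integral_of_continuous_uncurry hH μ₁).sub
    (continuous_integral_of_continuous_uncurry hH μ₂)

variable {P : Measure Y} [IsFiniteMeasure P] {Pk : Y → Y → ℝ}

theorem continuous_projCompl_uncurry {H : Y → Y → ℝ}
    (hPk : Continuous (uncurry Pk)) (hH : Continuous (uncurry H)) :
    Continuous (uncurry fun x => projCompl P Pk (H x)) := by
  have hint : Continuous (uncurry fun (p : Y × Y) y => Pk p.2 y * H p.1 y) := by fun_prop
  exact hH.sub (continuous_integral_of_continuous_uncurry hint P)

theorem continuous_residualKernel {K : Y → Y → ℝ} (hPk : Continuous (uncurry Pk))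
    (hK : Continuous (uncurry K)) : Continuous (uncurry (residualKernel P Pk K)) := by
  have hT : Continuous (uncurry fun y s => projCompl P Pk (K s) y) :=
    (continuous_projCompl_uncurry hPk hK).comp continuous_swap
  exact (continuous_projCompl_uncurry hPk hT).comp continuous_swap

theorem residualKernel_apply {K : Y → Y → ℝ} (hPk : Continuous (uncurry Pk))
    (hK : Continuous (uncurry K)) (x y : Y) :
    residualKernel P Pk K x y = K x y - (∫ s, Pk x s * K s y ∂P) - (∫ t, Pk y t * K x t ∂P)
      + ∫ s, ∫ t, Pk x s * K s t * Pk y t ∂P ∂P := by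
  have hinner : Continuous fun s => ∫ t, Pk y t * K s t ∂P :=
    continuous_integral_of_continuous_uncurry (by fun_prop) P
  have hpull : ∀ s, Pk x s * ∫ t, Pk y t * K s t ∂P = ∫ t, Pk x s * K s t * Pk y t ∂P := by
    intro s
    rw [← integral_const_mul]
    congr 1 with t
    ring
  simp only [residualKernel, projCompl, mul_sub]
  rw [integral_sub ((by fun_prop : Continuous fun s => Pk x s * K s y).integrable_of_compactSpace P)
    ((by fun_prop : Continuous _).integrable_of_compactSpace P)]
  simp only [hpull]
  ring

theorem signedIntegral_signedIntegral {μ₁ μ₂ : Measure Y} [IsFiniteMeasure μ₁]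
    [IsFiniteMeasure μ₂] {H : Y → Y → ℝ} (hH : Continuous (uncurry H)) :
    signedIntegral μ₁ μ₂ (fun x => signedIntegral μ₁ μ₂ (H x))
      = (∫ x, ∫ y, H x y ∂μ₁ ∂μ₁) - (∫ x, ∫ y, H x y ∂μ₂ ∂μ₁)
        - (∫ x, ∫ y, H x y ∂μ₁ ∂μ₂) + (∫ x, ∫ y, H x y ∂μ₂ ∂μ₂) := by
  have hint (m m' : Measure Y) [IsFiniteMeasure m] [IsFiniteMeasure m'] :
      Integrable (fun x => ∫ y, H x y ∂m) m' :=
    (continuous_integral_of_continuous_uncurry hH m).integrable_of_compactSpace m'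
  simp only [signedIntegral]
  rw [integral_sub (hint μ₁ μ₁) (hint μ₂ μ₁), integral_sub (hint μ₁ μ₂) (hint μ₂ μ₂)]
  ring

theorem projCompl_signedIntegral {μ₁ μ₂ : Measure Y} [IsFiniteMeasure μ₁] [IsFiniteMeasure μ₂]
    {H : Y → Y → ℝ} (hPk : Continuous (uncurry Pk)) (hH : Continuous (uncurry H)) (x : Y) :
    projCompl P Pk (fun s => signedIntegral μ₁ μ₂ (H s)) x
      = signedIntegral μ₁ μ₂ (fun y => projCompl P Pk (fun s => H s y) x) := by
  have hHx : Continuous (H x) := by fun_prop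
  have hprojH : Continuous fun y => ∫ s, Pk x s * H s y ∂P :=
    continuous_integral_of_continuous_uncurry (H := fun y s => Pk x s * H s y) (by fun_prop) P
  have hintP (m : Measure Y) [IsFiniteMeasure m] :
      Integrable (fun s => Pk x s * ∫ y, H s y ∂m) P :=
    ((hPk.uncurry_left x).mul
      (continuous_integral_of_continuous_uncurry hH m)).integrable_of_compactSpace P
  have hfubini (m : Measure Y) [IsFiniteMeasure m] :
      ∫ s, Pk x s * ∫ y, H s y ∂m ∂P = ∫ y, ∫ s, Pk x s * H s y ∂P ∂m := by
    simp_rw [← integral_const_mul]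
    exact integral_integral_swap
      ((by fun_prop : Continuous fun p : Y × Y => Pk x p.1 * H p.1 p.2).integrable_of_compactSpace _)
  simp only [projCompl, signedIntegral, mul_sub]
  rw [integral_sub (hintP μ₁) (hintP μ₂), hfubini, hfubini,
    integral_sub (hHx.integrable_of_compactSpace μ₁) (hprojH.integrable_of_compactSpace μ₁),
    integral_sub (hHx.integrable_of_compactSpace μ₂) (hprojH.integrable_of_compactSpace μ₂)]
  ring

theorem signedIntegral_kernel_eq_of_adjoint {μ₁ μ₂ ν₁ ν₂ : Measure Y} [IsFiniteMeasure μ₁]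
    [IsFiniteMeasure μ₂] {K : Y → Y → ℝ} (hPk : Continuous (uncurry Pk))
    (hK : Continuous (uncurry K))
    (hν : ∀ g, Continuous g → signedIntegral ν₁ ν₂ g = signedIntegral μ₁ μ₂ (projCompl P Pk g)) :
    signedIntegral ν₁ ν₂ (fun x => signedIntegral ν₁ ν₂ (K x))
      = signedIntegral μ₁ μ₂ (fun x => signedIntegral μ₁ μ₂ (residualKernel P Pk K x)) := by
  set T : Y → Y → ℝ := fun x => projCompl P Pk (K x)
  have hT : Continuous (uncurry T) := continuous_projCompl_uncurry hPk hK
  have hνK : (fun x => signedIntegral ν₁ ν₂ (K x)) = fun x => signedIntegral μ₁ μ₂ (T x) :=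
    funext fun x => hν _ (by fun_prop)
  rw [hνK, hν _ (continuous_signedIntegral_of_continuous_uncurry hT μ₁ μ₂)]
  congr 1 with x
  exact projCompl_signedIntegral hPk hT x

end Compact

theorem integral_gramKernel_mul_of_mem_span {Y : Type*} [MeasurableSpace Y] {P : Measure Y}
    {k : ℕ} {f : Fin k → Y → ℝ} (hf : ∀ i j, Integrable (fun y => f i y * f j y) P)
    {G : Matrix (Fin k) (Fin k) ℝ} (hG : ∀ i j, G i j = ∫ y, f i y * f j y ∂P)
    (hGinv : IsUnit G.det) {Pk : Y → Y → ℝ}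
    (hPk : ∀ x y, Pk x y = ∑ i, ∑ j, G⁻¹ i j * f i x * f j y)
    {g : Y → ℝ} (hg : g ∈ Submodule.span ℝ (Set.range f)) (x : Y) :
    ∫ y, Pk x y * g y ∂P = g x := by
  obtain ⟨c, rfl⟩ := (Submodule.mem_span_range_iff_exists_fun ℝ).mp hg
  have hexpand : ∀ y, Pk x y * (∑ l, c l • f l) y
      = ∑ l, ∑ i, ∑ j, (c l * G⁻¹ i j * f i x) * (f j y * f l y) := by
    intro y
    simp only [hPk, Finset.sum_apply, Pi.smul_apply, smul_eq_mul, Finset.sum_mul, Finset.mul_sum]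
    refine Finset.sum_congr rfl fun i _ => Finset.sum_congr rfl fun j _ =>
      Finset.sum_congr rfl fun l _ => by ring
  have hinv : ∀ i l, ∑ j, G⁻¹ i j * G j l = if i = l then 1 else 0 := by
    intro i l
    rw [← Matrix.mul_apply, Matrix.nonsing_inv_mul G hGinv, Matrix.one_apply]
  simp_rw [hexpand]
  rw [integral_finsetSum _ fun l _ => integrable_finsetSum _ fun i _ =>
    integrable_finsetSum _ fun j _ => (hf j l).const_mul _]
  simp_rw [integral_finsetSum _ fun i _ => integrable_finsetSum _ fun j _ => (hf j _).const_mul _,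
    integral_finsetSum _ fun j _ => (hf j _).const_mul _, integral_const_mul, ← hG]
  have hregroup : ∀ l i j, c l * G⁻¹ i j * f i x * G j l = c l * f i x * (G⁻¹ i j * G j l) :=
    fun _ _ _ => by ring
  simp_rw [hregroup, ← Finset.mul_sum, hinv]
  simp [Finset.sum_apply]

theorem residual_kernel_quadratic_form_eq_general
    {d k : ℕ} {X : Set (EuclideanSpace ℝ (Fin d))} (hX : IsCompact X)
    (f : Fin k → X → ℝ) (hfc : ∀ i, Continuous (f i))
    (K : X → X → ℝ)
    (hKcont : Continuous fun p : X × X => K p.1 p.2)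
    (P : Measure X) [IsProbabilityMeasure P]
    (G : Matrix (Fin k) (Fin k) ℝ)
    (hG : ∀ i j, G i j = ∫ x, f i x * f j x ∂P)
    (hGinv : IsUnit G.det)
    (Pk : X → X → ℝ)
    (hPk : ∀ x y, Pk x y = ∑ i, ∑ j, G⁻¹ i j * f i x * f j y)
    (KP : X → X → ℝ)
    (hKP : ∀ x y, KP x y = K x y - (∫ s, Pk x s * K s y ∂P)
        - (∫ t, Pk y t * K x t ∂P)
        + ∫ s, ∫ t, Pk x s * K s t * Pk y t ∂P ∂P)
    -- the finite signed measure μ = μ₁ − μ₂ and its pushforward ν = (I−Π_P)*μ = ν₁ − ν₂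
    (μ₁ μ₂ ν₁ ν₂ : Measure X) (hμ₁ : IsFiniteMeasure μ₁) (hμ₂ : IsFiniteMeasure μ₂)
    (hν₁ : IsFiniteMeasure ν₁) (hν₂ : IsFiniteMeasure ν₂)
    (hν : ∀ g : X → ℝ, Continuous g →
      (∫ x, g x ∂ν₁) - (∫ x, g x ∂ν₂)
        = (∫ x, (g x - ∫ y, Pk x y * g y ∂P) ∂μ₁)
          - (∫ x, (g x - ∫ y, Pk x y * g y ∂P) ∂μ₂)) :
    ((∫ x, ∫ y, KP x y ∂μ₁ ∂μ₁) - (∫ x, ∫ y, KP x y ∂μ₂ ∂μ₁)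
        - (∫ x, ∫ y, KP x y ∂μ₁ ∂μ₂) + (∫ x, ∫ y, KP x y ∂μ₂ ∂μ₂)
      = (∫ x, ∫ y, K x y ∂ν₁ ∂ν₁) - (∫ x, ∫ y, K x y ∂ν₂ ∂ν₁)
        - (∫ x, ∫ y, K x y ∂ν₁ ∂ν₂) + (∫ x, ∫ y, K x y ∂ν₂ ∂ν₂))
    ∧ (∀ g ∈ Submodule.span ℝ (Set.range f),
        (∫ x, g x ∂ν₁) - (∫ x, g x ∂ν₂) = 0) := by
  have : CompactSpace X := isCompact_iff_compactSpace.mp hX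
  have hPkc : Continuous (uncurry Pk) := by
    obtain rfl : Pk = fun x y => ∑ i, ∑ j, G⁻¹ i j * f i x * f j y := funext₂ hPk
    fun_prop
  obtain rfl : KP = residualKernel P Pk K :=
    funext₂ fun x y => (hKP x y).trans (residualKernel_apply hPkc hKcont x y).symm
  refine ⟨?_, fun g hg => ?_⟩
  · rw [← signedIntegral_signedIntegral (continuous_residualKernel hPkc hKcont),
      ← signedIntegral_signedIntegral hKcont]
    exact (signedIntegral_kernel_eq_of_adjoint hPkc hKcont hν).symm
  · obtain ⟨c, rfl⟩ := (Submodule.mem_span_range_iff_exists_fun ℝ).mp hg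
    have hgc : Continuous (∑ i, c i • f i) := by rw [Finset.sum_fn]; fun_prop
    rw [hν _ hgc]
    simp_rw [integral_gramKernel_mul_of_mem_span
      (fun i j => ((hfc i).mul (hfc j)).integrable_of_compactSpace P) hG hGinv hPk hg,
      sub_self, integral_zero, sub_zero]

/-- For the residual kernel `K_P` of a CPD kernel `K` w.r.t. an
`F`-nondegenerate `P`, and any finite signed Borel measure `μ` (encoded by a
Jordan decomposition `μ₁ - μ₂`), the measure `ν = (I−Π_P)*μ` (encoded `ν₁ - ν₂`,
characterized by `∫ f dν = ∫ (I−Π_P)f dμ` for all continuous `f`) satisfies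
`∬ K_P dμ dμ = ∬ K dν dν`, and `∫ f dν = 0` for every `f ∈ F`. -/
theorem residual_kernel_quadratic_form_eq
    {d k : ℕ} {X : Set (EuclideanSpace ℝ (Fin d))} (hX : IsCompact X)
    (f : Fin k → X → ℝ) (hfc : ∀ i, Continuous (f i)) (hli : LinearIndependent ℝ f)
    (K : X → X → ℝ) (hKsymm : ∀ x y, K x y = K y x)
    (hKcont : Continuous fun p : X × X => K p.1 p.2)
    (hCPD : ∀ (n : ℕ) (x : Fin n → X) (α : Fin n → ℝ),
        (∀ g ∈ Submodule.span ℝ (Set.range f), ∑ i, α i * g (x i) = 0) →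
        0 ≤ ∑ i, ∑ j, α i * α j * K (x i) (x j))
    (P : Measure X) [IsProbabilityMeasure P]
    (G : Matrix (Fin k) (Fin k) ℝ)
    (hG : ∀ i j, G i j = ∫ x, f i x * f j x ∂P)
    (hGinv : IsUnit G.det)
    (Pk : X → X → ℝ)
    (hPk : ∀ x y, Pk x y = ∑ i, ∑ j, G⁻¹ i j * f i x * f j y)
    (KP : X → X → ℝ)
    (hKP : ∀ x y, KP x y = K x y - (∫ s, Pk x s * K s y ∂P)
        - (∫ t, Pk y t * K x t ∂P)
        + ∫ s, ∫ t, Pk x s * K s t * Pk y t ∂P ∂P)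
    -- the finite signed measure μ = μ₁ − μ₂ and its pushforward ν = (I−Π_P)*μ = ν₁ − ν₂
    (μ₁ μ₂ ν₁ ν₂ : Measure X) (hμ₁ : IsFiniteMeasure μ₁) (hμ₂ : IsFiniteMeasure μ₂)
    (hν₁ : IsFiniteMeasure ν₁) (hν₂ : IsFiniteMeasure ν₂)
    (hν : ∀ g : X → ℝ, Continuous g →
      (∫ x, g x ∂ν₁) - (∫ x, g x ∂ν₂)
        = (∫ x, (g x - ∫ y, Pk x y * g y ∂P) ∂μ₁)
          - (∫ x, (g x - ∫ y, Pk x y * g y ∂P) ∂μ₂)) :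
    ((∫ x, ∫ y, KP x y ∂μ₁ ∂μ₁) - (∫ x, ∫ y, KP x y ∂μ₂ ∂μ₁)
        - (∫ x, ∫ y, KP x y ∂μ₁ ∂μ₂) + (∫ x, ∫ y, KP x y ∂μ₂ ∂μ₂)
      = (∫ x, ∫ y, K x y ∂ν₁ ∂ν₁) - (∫ x, ∫ y, K x y ∂ν₂ ∂ν₁)
        - (∫ x, ∫ y, K x y ∂ν₁ ∂ν₂) + (∫ x, ∫ y, K x y ∂ν₂ ∂ν₂))
    ∧ (∀ g ∈ Submodule.span ℝ (Set.range f),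
        (∫ x, g x ∂ν₁) - (∫ x, g x ∂ν₂) = 0) :=
  residual_kernel_quadratic_form_eq_general hX f hfc K hKcont P G hG hGinv Pk hPk KP hKP μ₁ μ₂ ν₁ ν₂
    hμ₁ hμ₂ hν₁ hν₂ hν
end

section
/- Let F ∈ ℝ^{k×N} have rank k, let Π = Fᵀ(FFᵀ)⁻¹F be the projection onto the row space of F, and let 𝐊 ∈ ℝ^{N×N} be symmetric positive semidefinite on the kernel of F (i.e., αᵀ𝐊α ≥ 0 whenever Fα = 0). Then for any y ∈ ℝᴺ and λ > 0, minimizing over α ∈ ℝᴺ with Fα = 0 and β ∈ ℝᵏ the objective ‖𝐊α + Fᵀβ − y‖² + λαᵀ𝐊α is equivalent to minimizing over α the unconstrained objective ‖𝐊̃α − r‖² + λαᵀ𝐊̃α, where 𝐊̃ = (I−Π)𝐊(I−Π) and r = (I−Π)y; moreover the optimal β equals −(FFᵀ)⁻¹F(𝐊α − y). -/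
open Matrix

private lemma dot_self_nonneg' {n : ℕ} (v : Fin n → ℝ) : 0 ≤ v ⬝ᵥ v :=
  Finset.sum_nonneg fun _ _ => mul_self_nonneg _

private lemma mulVec_dot {m n : ℕ} (A : Matrix (Fin m) (Fin n) ℝ) (x : Fin n → ℝ)
    (z : Fin m → ℝ) : (A *ᵥ x) ⬝ᵥ z = x ⬝ᵥ (Aᵀ *ᵥ z) := by
  rw [Matrix.dotProduct_mulVec, Matrix.vecMul_transpose]

private lemma isUnit_FFt {k N : ℕ} (F : Matrix (Fin k) (Fin N) ℝ) (hF : F.rank = k) :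
    IsUnit (F * Fᵀ).det := by
  have h1 : (F * Fᵀ).rank = k := by rw [Matrix.rank_self_mul_transpose, hF]
  have htop : LinearMap.range (F * Fᵀ).mulVecLin = ⊤ := by
    apply Submodule.eq_top_of_finrank_eq
    rw [Module.finrank_fintype_fun_eq_card, Fintype.card_fin]
    exact h1
  have hsurj : Function.Surjective ((F * Fᵀ).mulVec) :=
    LinearMap.range_eq_top.mp htop
  exact (Matrix.isUnit_iff_isUnit_det _).mp (Matrix.mulVec_surjective_iff_isUnit.mp hsurj)


/-- Conditional KRR over `{α : Fα = 0}, β` is equivalent to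
unconstrained KRR with the projected kernel matrix `K̃ = (I−Π)K(I−Π)` on the
residuals `r = (I−Π)y`; moreover at any constrained optimum,
`β = −(FFᵀ)⁻¹F(Kα − y)`. -/
theorem conditional_krr_reduction
    {k N : ℕ} (F : Matrix (Fin k) (Fin N) ℝ) (hF : F.rank = k)
    (Km : Matrix (Fin N) (Fin N) ℝ) (hKsym : Km.IsSymm)
    (hPSD : ∀ α : Fin N → ℝ, F *ᵥ α = 0 → 0 ≤ α ⬝ᵥ (Km *ᵥ α))
    (y : Fin N → ℝ) (lam : ℝ) (hlam : 0 < lam) :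
    let Pi : Matrix (Fin N) (Fin N) ℝ := Fᵀ * (F * Fᵀ)⁻¹ * F
    let Kt : Matrix (Fin N) (Fin N) ℝ := (1 - Pi) * Km * (1 - Pi)
    let r : Fin N → ℝ := (1 - Pi) *ᵥ y
    let J1 : (Fin N → ℝ) → (Fin k → ℝ) → ℝ := fun α β =>
      (Km *ᵥ α + Fᵀ *ᵥ β - y) ⬝ᵥ (Km *ᵥ α + Fᵀ *ᵥ β - y) + lam * (α ⬝ᵥ (Km *ᵥ α))
    let J2 : (Fin N → ℝ) → ℝ := fun α =>
      (Kt *ᵥ α - r) ⬝ᵥ (Kt *ᵥ α - r) + lam * (α ⬝ᵥ (Kt *ᵥ α))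
    sInf {v : ℝ | ∃ α β, F *ᵥ α = 0 ∧ v = J1 α β}
      = sInf {v : ℝ | ∃ α, v = J2 α}
    ∧ ∀ (α : Fin N → ℝ) (β : Fin k → ℝ), F *ᵥ α = 0 →
        (∀ (α' : Fin N → ℝ) (β' : Fin k → ℝ), F *ᵥ α' = 0 → J1 α β ≤ J1 α' β') →
        β = -((F * Fᵀ)⁻¹ *ᵥ (F *ᵥ (Km *ᵥ α - y))) := by
  intro Pi Kt r J1 J2
  set G : Matrix (Fin k) (Fin k) ℝ := F * Fᵀ with hGdef
  have hGdet : IsUnit G.det := isUnit_FFt F hF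
  have hGiG : G⁻¹ * G = 1 := Matrix.nonsing_inv_mul _ hGdet
  have hGGi : G * G⁻¹ = 1 := Matrix.mul_nonsing_inv _ hGdet
  have hGsym : Gᵀ = G := by simp [hGdef, Matrix.transpose_mul]
  have hGisym : (G⁻¹)ᵀ = G⁻¹ := by rw [Matrix.transpose_nonsing_inv, hGsym]
  have hPisym : Piᵀ = Pi := by
    show (Fᵀ * G⁻¹ * F)ᵀ = Fᵀ * G⁻¹ * F
    rw [Matrix.transpose_mul, Matrix.transpose_mul, Matrix.transpose_transpose, hGisym,
      Matrix.mul_assoc]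
  have hFPi : F * Pi = F := by
    show F * (Fᵀ * G⁻¹ * F) = F
    rw [← Matrix.mul_assoc, ← Matrix.mul_assoc, ← hGdef, hGGi, Matrix.one_mul]
  have hPiFt : Pi * Fᵀ = Fᵀ := by
    show Fᵀ * G⁻¹ * F * Fᵀ = Fᵀ
    rw [Matrix.mul_assoc, ← hGdef, Matrix.mul_assoc, hGiG, Matrix.mul_one]
  have hPiPi : Pi * Pi = Pi := by
    show Pi * (Fᵀ * G⁻¹ * F) = Pi
    rw [← Matrix.mul_assoc, ← Matrix.mul_assoc, hPiFt]
  set Q : Matrix (Fin N) (Fin N) ℝ := 1 - Pi with hQdef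
  have hQsym : Qᵀ = Q := by rw [hQdef, Matrix.transpose_sub, Matrix.transpose_one, hPisym]
  have hFQ : F * Q = 0 := by rw [hQdef, Matrix.mul_sub, Matrix.mul_one, hFPi, sub_self]
  have hQFt : Q * Fᵀ = 0 := by rw [hQdef, Matrix.sub_mul, Matrix.one_mul, hPiFt, sub_self]
  have hQPi : Q * Pi = 0 := by rw [hQdef, Matrix.sub_mul, Matrix.one_mul, hPiPi, sub_self]
  have hQQ : Q * Q = Q := by rw [hQdef, Matrix.mul_sub, Matrix.mul_one, ← hQdef, hQPi, sub_zero]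
  have hKtQ : Kt * Q = Kt := by
    show Q * Km * Q * Q = Q * Km * Q
    rw [Matrix.mul_assoc, hQQ]
  have hQKt : Q * Kt = Kt := by
    show Q * (Q * Km * Q) = Q * Km * Q
    rw [← Matrix.mul_assoc, ← Matrix.mul_assoc, hQQ]
  -- For α in the kernel of F, Q α = α
  have hQfix : ∀ α : Fin N → ℝ, F *ᵥ α = 0 → Q *ᵥ α = α := by
    intro α hα
    have : Pi *ᵥ α = 0 := by
      show (Fᵀ * G⁻¹ * F) *ᵥ α = 0
      rw [← Matrix.mulVec_mulVec, hα, Matrix.mulVec_zero]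
    rw [hQdef, Matrix.sub_mulVec, Matrix.one_mulVec, this, sub_zero]
  have hFQv : ∀ x : Fin N → ℝ, F *ᵥ (Q *ᵥ x) = 0 := by
    intro x
    rw [Matrix.mulVec_mulVec, hFQ, Matrix.zero_mulVec]
  -- β* and the key decomposition
  set bstar : (Fin N → ℝ) → (Fin k → ℝ) := fun α => -(G⁻¹ *ᵥ (F *ᵥ (Km *ᵥ α - y)))
    with hbstar
  have hPivFt : ∀ z : Fin N → ℝ, Fᵀ *ᵥ (G⁻¹ *ᵥ (F *ᵥ z)) = Pi *ᵥ z := by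
    intro z
    rw [Matrix.mulVec_mulVec, Matrix.mulVec_mulVec]
  have key : ∀ (α : Fin N → ℝ) (β : Fin k → ℝ), F *ᵥ α = 0 →
      J1 α β = J2 α + (Pi *ᵥ (Km *ᵥ α - y) + Fᵀ *ᵥ β) ⬝ᵥ (Pi *ᵥ (Km *ᵥ α - y) + Fᵀ *ᵥ β) := by
    intro α β hα
    set z : Fin N → ℝ := Km *ᵥ α - y with hz
    set u : Fin N → ℝ := Q *ᵥ z with hu
    set w : Fin N → ℝ := Pi *ᵥ z + Fᵀ *ᵥ β with hw
    have hsplit : Km *ᵥ α + Fᵀ *ᵥ β - y = u + w := by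
      have hQP : Q + Pi = 1 := by rw [hQdef, sub_add_cancel]
      have hzz : Q *ᵥ z + Pi *ᵥ z = z := by
        rw [← Matrix.add_mulVec, hQP, Matrix.one_mulVec]
      rw [hu, hw, ← add_assoc, hzz, hz]
      abel
    have hQw : Q *ᵥ w = 0 := by
      rw [hw, Matrix.mulVec_add, Matrix.mulVec_mulVec, Matrix.mulVec_mulVec, hQPi, hQFt,
        Matrix.zero_mulVec, Matrix.zero_mulVec, add_zero]
    have huw : u ⬝ᵥ w = 0 := by
      rw [hu, mulVec_dot, hQsym, hQw, dotProduct_zero]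
    have hKtv : Kt *ᵥ α - r = u := by
      rw [hu, hz]
      show Kt *ᵥ α - Q *ᵥ y = Q *ᵥ (Km *ᵥ α - y)
      have h1 : Kt *ᵥ α = Q *ᵥ (Km *ᵥ α) := by
        show (Q * Km * Q) *ᵥ α = Q *ᵥ (Km *ᵥ α)
        rw [← Matrix.mulVec_mulVec, hQfix α hα, ← Matrix.mulVec_mulVec]
      rw [h1, Matrix.mulVec_sub]
    have hKtq : α ⬝ᵥ (Kt *ᵥ α) = α ⬝ᵥ (Km *ᵥ α) := by
      have h1 : Kt *ᵥ α = Q *ᵥ (Km *ᵥ α) := by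
        show (Q * Km * Q) *ᵥ α = Q *ᵥ (Km *ᵥ α)
        rw [← Matrix.mulVec_mulVec, hQfix α hα, ← Matrix.mulVec_mulVec]
      rw [h1, dotProduct_comm, mulVec_dot, hQsym, hQfix α hα, dotProduct_comm]
    show (Km *ᵥ α + Fᵀ *ᵥ β - y) ⬝ᵥ (Km *ᵥ α + Fᵀ *ᵥ β - y) + lam * (α ⬝ᵥ (Km *ᵥ α))
      = (Kt *ᵥ α - r) ⬝ᵥ (Kt *ᵥ α - r) + lam * (α ⬝ᵥ (Kt *ᵥ α)) + w ⬝ᵥ w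
    clear_value z u w
    have expand : (u + w) ⬝ᵥ (u + w) = u ⬝ᵥ u + w ⬝ᵥ w := by
      rw [add_dotProduct, dotProduct_add, dotProduct_add, huw,
        dotProduct_comm w u, huw, add_zero, zero_add]
    rw [hsplit, expand, hKtv, hKtq]
    ring
  have hbstar_zero : ∀ α : Fin N → ℝ,
      Pi *ᵥ (Km *ᵥ α - y) + Fᵀ *ᵥ (bstar α) = 0 := by
    intro α
    rw [hbstar, Matrix.mulVec_neg, hPivFt, add_neg_cancel]
  have hJ1bstar : ∀ α : Fin N → ℝ, F *ᵥ α = 0 → J1 α (bstar α) = J2 α := by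
    intro α hα
    rw [key α (bstar α) hα, hbstar_zero α, dotProduct_zero, add_zero]
  have hJ1ge : ∀ (α : Fin N → ℝ) (β : Fin k → ℝ), F *ᵥ α = 0 → J2 α ≤ J1 α β := by
    intro α β hα
    rw [key α β hα]
    exact le_add_of_nonneg_right (dot_self_nonneg' _)
  -- J2 is invariant under projection
  have hJ2proj : ∀ α : Fin N → ℝ, J2 (Q *ᵥ α) = J2 α := by
    intro α
    have h1 : Kt *ᵥ (Q *ᵥ α) = Kt *ᵥ α := by
      rw [Matrix.mulVec_mulVec, hKtQ]
    have h2 : (Q *ᵥ α) ⬝ᵥ (Kt *ᵥ (Q *ᵥ α)) = α ⬝ᵥ (Kt *ᵥ α) := by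
      rw [h1, mulVec_dot, hQsym, Matrix.mulVec_mulVec, hQKt]
    simp only [J2]
    rw [h2, h1]
  have hJ1nonneg : ∀ (α : Fin N → ℝ) (β : Fin k → ℝ), F *ᵥ α = 0 → 0 ≤ J1 α β := by
    intro α β hα
    have := hPSD α hα
    have h2 := dot_self_nonneg' (Km *ᵥ α + Fᵀ *ᵥ β - y)
    show 0 ≤ (Km *ᵥ α + Fᵀ *ᵥ β - y) ⬝ᵥ _ + lam * (α ⬝ᵥ (Km *ᵥ α))
    positivity
  set S1 : Set ℝ := {v : ℝ | ∃ α β, F *ᵥ α = 0 ∧ v = J1 α β} with hS1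
  set S2 : Set ℝ := {v : ℝ | ∃ α, v = J2 α} with hS2
  have hS2subS1 : S2 ⊆ S1 := by
    rintro v ⟨α, rfl⟩
    refine ⟨Q *ᵥ α, bstar (Q *ᵥ α), hFQv α, ?_⟩
    rw [hJ1bstar _ (hFQv α), hJ2proj]
  have hS1ne : S1.Nonempty := ⟨J1 0 0, 0, 0, by simp, rfl⟩
  have hS2ne : S2.Nonempty := ⟨J2 0, 0, rfl⟩
  have hS1bdd : BddBelow S1 := by
    refine ⟨0, ?_⟩
    rintro v ⟨α, β, hα, rfl⟩
    exact hJ1nonneg α β hα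
  have hS2bdd : BddBelow S2 := by
    refine ⟨0, ?_⟩
    rintro v ⟨α, rfl⟩
    rw [← hJ2proj, ← hJ1bstar _ (hFQv α)]
    exact hJ1nonneg _ _ (hFQv α)
  constructor
  · apply le_antisymm
    · exact csInf_le_csInf hS1bdd hS2ne hS2subS1
    · apply le_csInf hS1ne
      rintro v ⟨α, β, hα, rfl⟩
      calc sInf S2 ≤ J2 α := csInf_le hS2bdd ⟨α, rfl⟩
        _ ≤ J1 α β := hJ1ge α β hα
  · intro α β hα hopt
    have h1 : J1 α β ≤ J2 α := by
      rw [← hJ1bstar α hα]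
      exact hopt α (bstar α) hα
    have h2 := key α β hα
    set w : Fin N → ℝ := Pi *ᵥ (Km *ᵥ α - y) + Fᵀ *ᵥ β with hw
    have hwz : w ⬝ᵥ w = 0 := by
      have := dot_self_nonneg' w
      linarith
    have hw0 : w = 0 := by
      rwa [dotProduct_self_eq_zero] at hwz
    -- Fᵀ (β - bstar α) = 0, and Fᵀ injective
    have hFt : Fᵀ *ᵥ (β - bstar α) = 0 := by
      rw [Matrix.mulVec_sub, hbstar, Matrix.mulVec_neg, hPivFt, sub_neg_eq_add, add_comm]
      exact hw0
    have hb : β - bstar α = 0 := by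
      have h3 : G *ᵥ (β - bstar α) = 0 := by
        rw [hGdef, ← Matrix.mulVec_mulVec, hFt, Matrix.mulVec_zero]
      have h4 : (G⁻¹ * G) *ᵥ (β - bstar α) = 0 := by
        rw [← Matrix.mulVec_mulVec, h3, Matrix.mulVec_zero]
      rwa [hGiG, Matrix.one_mulVec] at h4
    exact sub_eq_zero.mp hb
end

section
/- Let A, B be bounded linear operators from ℝᴺ to a Hilbert space H with ‖A‖ ≤ α and ‖B‖ ≤ α, and let λ > 0. Define t(A) = A(AᵀA + λI_N)⁻¹Aᵀ (an operator on H, where Aᵀ denotes the adjoint). Then ‖t(A) − t(B)‖ ≤ (2α/λ + 2α³/λ²)‖A − B‖ in operator norm. -/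
/-!
With `M_C = CᵀC + λI` we have `⟪M_C x, x⟫ = ‖C x‖² + λ‖x‖² ≥ λ‖x‖²`, so `M_C` is invertible with
`‖M_C⁻¹‖ ≤ 1/λ`. The resolvent identity `M_A⁻¹ - M_B⁻¹ = M_A⁻¹ (M_B - M_A) M_B⁻¹` together with
`‖M_B - M_A‖ ≤ 2α‖A - B‖` bounds `‖M_A⁻¹ - M_B⁻¹‖` by `2α‖A - B‖/λ²`. Telescoping the triple
product `t(A) - t(B) = A M_A⁻¹ Aᵀ - B M_B⁻¹ Bᵀ` one factor at a time then gives the two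
terms `2α/λ` (from the outer factors) and `2α³/λ²` (from the middle one).
-/

open ContinuousLinearMap

section CompBounds

variable {𝕜 E F G K : Type*} [NontriviallyNormedField 𝕜]
  [SeminormedAddCommGroup E] [NormedSpace 𝕜 E] [SeminormedAddCommGroup F] [NormedSpace 𝕜 F]
  [SeminormedAddCommGroup G] [NormedSpace 𝕜 G] [SeminormedAddCommGroup K] [NormedSpace 𝕜 K]

theorem ContinuousLinearMap.norm_comp_sub_comp_le (X X' : F →L[𝕜] G) (Y Y' : E →L[𝕜] F) :
    ‖X ∘L Y - X' ∘L Y'‖ ≤ ‖X - X'‖ * ‖Y‖ + ‖X'‖ * ‖Y - Y'‖ := by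
  have hsplit : X ∘L Y - X' ∘L Y' = (X - X') ∘L Y + X' ∘L (Y - Y') := by
    rw [sub_comp, comp_sub]; abel
  rw [hsplit]
  exact (norm_add_le _ _).trans (add_le_add (opNorm_comp_le _ _) (opNorm_comp_le _ _))

theorem ContinuousLinearMap.norm_comp_comp_sub_comp_comp_le (X X' : G →L[𝕜] K)
    (Y Y' : F →L[𝕜] G) (Z Z' : E →L[𝕜] F) :
    ‖X ∘L Y ∘L Z - X' ∘L Y' ∘L Z'‖ ≤
      ‖X - X'‖ * ‖Y‖ * ‖Z‖ + ‖X'‖ * ‖Y - Y'‖ * ‖Z‖ + ‖X'‖ * ‖Y'‖ * ‖Z - Z'‖ :=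
  calc ‖X ∘L Y ∘L Z - X' ∘L Y' ∘L Z'‖
      ≤ ‖X - X'‖ * ‖Y ∘L Z‖ + ‖X'‖ * ‖Y ∘L Z - Y' ∘L Z'‖ := norm_comp_sub_comp_le _ _ _ _
    _ ≤ ‖X - X'‖ * (‖Y‖ * ‖Z‖) + ‖X'‖ * (‖Y - Y'‖ * ‖Z‖ + ‖Y'‖ * ‖Z - Z'‖) := by
      gcongr
      · exact opNorm_comp_le _ _
      · exact norm_comp_sub_comp_le _ _ _ _
    _ = _ := by ring

theorem ContinuousLinearMap.norm_ringInverse_le_of_antilipschitz {T : E →L[𝕜] E} (hT : IsUnit T)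
    {c : NNReal} (hc : AntilipschitzWith c T) : ‖Ring.inverse T‖ ≤ c := by
  refine opNorm_le_bound _ c.coe_nonneg fun y => ?_
  have hTT : T (Ring.inverse T y) = y := DFunLike.congr_fun (Ring.mul_inverse_cancel T hT) y
  simpa only [hTT] using hc.le_mul_norm (map_zero T) (Ring.inverse T y)

end CompBounds

section RegularizedGram

variable {E H : Type*} [NormedAddCommGroup E] [InnerProductSpace ℝ E] [CompleteSpace E]
  [NormedAddCommGroup H] [InnerProductSpace ℝ H] [CompleteSpace H]

noncomputable def regularizedGram (C : E →L[ℝ] H) (lam : ℝ) : E →L[ℝ] E :=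
  adjoint C ∘L C + lam • ContinuousLinearMap.id ℝ E

theorem inner_regularizedGram_apply_self (C : E →L[ℝ] H) (lam : ℝ) (x : E) :
    inner ℝ (regularizedGram C lam x) x = ‖C x‖ ^ 2 + lam * ‖x‖ ^ 2 := by
  simp [regularizedGram, inner_add_left, inner_smul_left, adjoint_inner_left]

theorem regularizedGram_sub_regularizedGram (A B : E →L[ℝ] H) (lam : ℝ) :
    regularizedGram A lam - regularizedGram B lam = adjoint A ∘L A - adjoint B ∘L B := by
  simp only [regularizedGram]; abel

variable {lam : ℝ}

theorem sq_norm_mul_le_norm_inner_regularizedGram_apply_self (C : E →L[ℝ] H) (hlam : 0 ≤ lam)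
    (x : E) : ‖x‖ ^ 2 * lam ≤ ‖inner ℝ (regularizedGram C lam x) x‖ := by
  rw [inner_regularizedGram_apply_self, Real.norm_of_nonneg (by positivity)]
  linarith [sq_nonneg ‖C x‖]

theorem antilipschitzWith_regularizedGram (C : E →L[ℝ] H) (hlam : 0 < lam) :
    AntilipschitzWith ⟨lam, hlam.le⟩⁻¹ (regularizedGram C lam) :=
  antilipschitz_of_forall_le_inner_map _ hlam
    (sq_norm_mul_le_norm_inner_regularizedGram_apply_self C hlam.le)

theorem isUnit_regularizedGram (C : E →L[ℝ] H) (hlam : 0 < lam) :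
    IsUnit (regularizedGram C lam) :=
  isUnit_of_forall_le_norm_inner_map _ (c := ⟨lam, hlam.le⟩) hlam
    (sq_norm_mul_le_norm_inner_regularizedGram_apply_self C hlam.le)

theorem norm_inverse_regularizedGram_le (C : E →L[ℝ] H) (hlam : 0 < lam) :
    ‖Ring.inverse (regularizedGram C lam)‖ ≤ lam⁻¹ :=
  norm_ringInverse_le_of_antilipschitz (isUnit_regularizedGram C hlam)
    (antilipschitzWith_regularizedGram C hlam)

theorem norm_regularizedGram_sub_le (A B : E →L[ℝ] H) :
    ‖regularizedGram A lam - regularizedGram B lam‖ ≤ (‖A‖ + ‖B‖) * ‖A - B‖ := by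
  rw [regularizedGram_sub_regularizedGram]
  calc ‖adjoint A ∘L A - adjoint B ∘L B‖
      ≤ ‖adjoint A - adjoint B‖ * ‖A‖ + ‖adjoint B‖ * ‖A - B‖ := norm_comp_sub_comp_le _ _ _ _
    _ = (‖A‖ + ‖B‖) * ‖A - B‖ := by
      rw [← map_sub, LinearIsometryEquiv.norm_map, LinearIsometryEquiv.norm_map]; ring

theorem norm_inverse_regularizedGram_sub_le (A B : E →L[ℝ] H) (hlam : 0 < lam) :
    ‖Ring.inverse (regularizedGram A lam) - Ring.inverse (regularizedGram B lam)‖ ≤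
      (‖A‖ + ‖B‖) * ‖A - B‖ / lam ^ 2 := by
  have hunits : IsUnit (regularizedGram A lam) ↔ IsUnit (regularizedGram B lam) :=
    iff_of_true (isUnit_regularizedGram A hlam) (isUnit_regularizedGram B hlam)
  rw [Ring.inverse_sub_inverse hunits]
  calc _ ≤ ‖Ring.inverse (regularizedGram A lam)‖ * ‖regularizedGram B lam - regularizedGram A lam‖
          * ‖Ring.inverse (regularizedGram B lam)‖ := norm_mul₃_le
    _ ≤ lam⁻¹ * ((‖A‖ + ‖B‖) * ‖A - B‖) * lam⁻¹ := by
      gcongr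
      · exact norm_inverse_regularizedGram_le A hlam
      · rw [norm_sub_rev]; exact norm_regularizedGram_sub_le A B
      · exact norm_inverse_regularizedGram_le B hlam
    _ = _ := by field_simp

end RegularizedGram

/-- Lipschitz estimate for `t(A) = A(AᵀA + λI)⁻¹Aᵀ` in operator
norm: if `‖A‖, ‖B‖ ≤ α` then `‖t(A) − t(B)‖ ≤ (2α/λ + 2α³/λ²)‖A − B‖`. -/
theorem tA_lipschitz
    {N : ℕ} {H : Type*} [NormedAddCommGroup H] [InnerProductSpace ℝ H] [CompleteSpace H]
    (A B : EuclideanSpace ℝ (Fin N) →L[ℝ] H) (α lam : ℝ) (hlam : 0 < lam)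
    (hA : ‖A‖ ≤ α) (hB : ‖B‖ ≤ α) :
    let t : (EuclideanSpace ℝ (Fin N) →L[ℝ] H) → (H →L[ℝ] H) := fun C =>
      C ∘L (Ring.inverse (adjoint C ∘L C + lam • ContinuousLinearMap.id ℝ _)) ∘L adjoint C
    ‖t A - t B‖ ≤ (2 * α / lam + 2 * α ^ 3 / lam ^ 2) * ‖A - B‖ := by
  change ‖A ∘L Ring.inverse (regularizedGram A lam) ∘L adjoint A
    - B ∘L Ring.inverse (regularizedGram B lam) ∘L adjoint B‖ ≤ _
  have hα : 0 ≤ α := (norm_nonneg A).trans hA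
  have hadj : ‖adjoint A - adjoint B‖ = ‖A - B‖ := by
    rw [← map_sub, LinearIsometryEquiv.norm_map]
  have hIA := norm_inverse_regularizedGram_le A hlam
  have hIB := norm_inverse_regularizedGram_le B hlam
  have hIAB := norm_inverse_regularizedGram_sub_le A B hlam
  calc _
      ≤ ‖A - B‖ * lam⁻¹ * α + α * ((α + α) * ‖A - B‖ / lam ^ 2) * α + α * lam⁻¹ * ‖A - B‖ := by
        refine (norm_comp_comp_sub_comp_comp_le _ _ _ _ _ _).trans ?_
        rw [LinearIsometryEquiv.norm_map, hadj]
        gcongr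
        exact hIAB.trans (by gcongr)
    _ = (2 * α / lam + 2 * α ^ 3 / lam ^ 2) * ‖A - B‖ := by ring
end

section
/- In the setting of the previous statement, for fixed indices i ≠ n define C_{i,n} = ∑ⱼ λⱼ²·M_{i,j}M_{j,n} where M_{ℓ,m} = ξ_ℓᵀG⁻¹ξ_m and G = ∑ⱼλⱼξⱼξⱼᵀ. Then E[C_{i,n}] = 0. -/
/-!
Flipping the sign of the single vector `ξᵢ` is a symmetry of the joint law of the `ξⱼ`, since they
are independent and each coordinate is a centred Gaussian. It fixes `G`, because every `ξⱼ` enters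
`G` through `ξⱼ ξⱼᵀ`, and so it multiplies `M_{l,m}` by `sₗ sₘ` with `s = ±1` the flip signs.
Each term `λⱼ² M_{i,j} M_{j,n}` then picks up the factor `sᵢ sⱼ² sₙ = -1` (as `i ≠ n`), so
`C_{i,n}` is odd under a law-preserving map and its mean vanishes.
-/

open MeasureTheory ProbabilityTheory Matrix Function

namespace Matrix

variable {m n α : Type*}

instance [MeasurableSpace α] : MeasurableSpace (Matrix m n α) := MeasurableSpace.pi

instance [TopologicalSpace α] [MeasurableSpace α] [SecondCountableTopology α] [BorelSpace α]
    [Countable m] [Countable n] : BorelSpace (Matrix m n α) :=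
  Pi.borelSpace

instance [Fintype n] [DecidableEq n] : MeasurableInv (Matrix n n ℝ) where
  measurable_inv := by
    have h : (Inv.inv : Matrix n n ℝ → Matrix n n ℝ) = fun A => A.det⁻¹ • A.adjugate := by
      ext A : 1
      rw [inv_def, Ring.inverse_eq_inv']
    rw [h]
    refine measurable_pi_iff.2 fun a => measurable_pi_iff.2 fun b => ?_
    simp only [smul_apply, smul_eq_mul]
    exact continuous_id.matrix_det.measurable.inv.mul
      ((continuous_apply_apply a b).comp continuous_id.matrix_adjugate).measurable

end Matrix

theorem gaussianReal_map_const_mul_of_mul_self_eq_one {c : ℝ} (hc : c * c = 1) (v : NNReal) :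
    (gaussianReal 0 v).map (c * ·) = gaussianReal 0 v := by
  rw [gaussianReal_map_const_mul, mul_zero]
  congr
  ext
  simp [sq, hc]

section SignSymmetry

variable {Ω : Type*} [MeasurableSpace Ω] {μ : Measure Ω}

theorem ProbabilityTheory.iIndepFun.map_comp_eq_map [IsProbabilityMeasure μ] {ι β : Type*}
    [MeasurableSpace β] {X : ι → Ω → β} (hX : ∀ p, Measurable (X p)) (hind : iIndepFun X μ)
    {f : ι → β → β} (hf : ∀ p, Measurable (f p)) (hlaw : ∀ p, μ.map (f p ∘ X p) = μ.map (X p)) :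
    μ.map (fun ω p => f p (X p ω)) = μ.map (fun ω p => X p ω) := by
  have h := (hind.comp f hf).map_fun_eq_infinitePi_map fun p => (hf p).comp (hX p)
  simp only [hlaw] at h
  exact h.trans (hind.map_fun_eq_infinitePi_map hX).symm

theorem integral_comp_eq_zero_of_map_eq_of_odd {E : Type*} [MeasurableSpace E]
    {X : Ω → E} {T : E → E} {F : E → ℝ} (hX : Measurable X) (hT : Measurable T)
    (hF : Measurable F) (hlaw : μ.map (T ∘ X) = μ.map X) (hodd : ∀ x, F (T x) = -F x) :
    ∫ ω, F (X ω) ∂μ = 0 := by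
  have hid : IdentDistrib (F ∘ T ∘ X) (F ∘ X) μ μ :=
    (IdentDistrib.mk (hT.comp hX).aemeasurable hX.aemeasurable hlaw).comp hF
  have h := hid.integral_eq
  simp only [Function.comp_apply, hodd, integral_neg] at h
  linarith

end SignSymmetry

section GramFunctionals

variable {ι n : Type*}

def scaleRows (s : ι → ℝ) (v : ι × n → ℝ) : ι × n → ℝ := fun p => s p.1 * v p

theorem curry_scaleRows (s : ι → ℝ) (v : ι × n → ℝ) (j : ι) :
    curry (scaleRows s v) j = s j • curry v j :=
  rfl

-- The rows `curry v j` of a sample `v` stand for the `ξⱼ`; `weightedGram`, `gramInvForm` and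
-- `gramCross` are `G`, `M` and `C` as functions of the sample.
noncomputable def weightedGram (lam : ι → ℝ) (v : ι × n → ℝ) : Matrix n n ℝ :=
  ∑' j, lam j • vecMulVec (curry v j) (curry v j)

theorem weightedGram_scaleRows {s : ι → ℝ} (hs : ∀ j, s j * s j = 1) (lam : ι → ℝ)
    (v : ι × n → ℝ) : weightedGram lam (scaleRows s v) = weightedGram lam v := by
  refine tsum_congr fun j => ?_
  rw [curry_scaleRows, smul_vecMulVec, vecMulVec_smul, smul_smul (s j), hs, one_smul]

variable [Fintype n] [DecidableEq n]

noncomputable def gramInvForm (lam : ι → ℝ) (v : ι × n → ℝ) (l m : ι) : ℝ :=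
  curry v l ⬝ᵥ ((weightedGram lam v)⁻¹ *ᵥ curry v m)

noncomputable def gramCross (lam : ι → ℝ) (v : ι × n → ℝ) (i m : ι) : ℝ :=
  ∑' j, lam j ^ 2 * gramInvForm lam v i j * gramInvForm lam v j m

theorem gramInvForm_scaleRows {s : ι → ℝ} (hs : ∀ j, s j * s j = 1) (lam : ι → ℝ)
    (v : ι × n → ℝ) (l m : ι) :
    gramInvForm lam (scaleRows s v) l m = s l * s m * gramInvForm lam v l m := by
  simp only [gramInvForm, weightedGram_scaleRows hs, curry_scaleRows, mulVec_smul,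
    smul_dotProduct, dotProduct_smul, smul_eq_mul]
  ring

theorem gramCross_scaleRows {s : ι → ℝ} (hs : ∀ j, s j * s j = 1) (lam : ι → ℝ)
    (v : ι × n → ℝ) (i m : ι) :
    gramCross lam (scaleRows s v) i m = s i * s m * gramCross lam v i m := by
  rw [gramCross, gramCross, ← tsum_mul_left]
  refine tsum_congr fun j => ?_
  rw [gramInvForm_scaleRows hs, gramInvForm_scaleRows hs]
  linear_combination
    (lam j ^ 2 * s i * s m * gramInvForm lam v i j * gramInvForm lam v j m) * hs j

end GramFunctionals

section Measurability

variable {ι n : Type*}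

theorem measurable_scaleRows (s : ι → ℝ) : Measurable (scaleRows (n := n) s) :=
  measurable_pi_lambda _ fun _ => measurable_const.mul (measurable_pi_apply _)

variable [Countable ι] [Fintype n] (lam : ι → ℝ)

theorem measurable_weightedGram : Measurable (weightedGram (n := n) lam) := by
  refine Measurable.tsum (E := n → n → ℝ) fun j =>
    measurable_pi_iff.2 fun a => measurable_pi_iff.2 fun b => ?_
  simp only [Matrix.smul_apply, vecMulVec_apply, curry_apply, smul_eq_mul]
  fun_prop

variable [DecidableEq n]

theorem measurable_gramInvForm (l m : ι) :
    Measurable fun v => gramInvForm (n := n) lam v l m := by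
  have hinv : ∀ a b, Measurable fun v => (weightedGram (n := n) lam v)⁻¹ a b := fun a b =>
    measurable_pi_iff.1 (measurable_pi_iff.1 (measurable_weightedGram lam).inv a) b
  simp only [gramInvForm, dotProduct, mulVec, curry_apply]
  exact Finset.measurable_sum _ fun a _ => (measurable_pi_apply _).mul
    (Finset.measurable_sum _ fun b _ => (hinv a b).mul (measurable_pi_apply _))

theorem measurable_gramCross (i m : ι) : Measurable fun v => gramCross (n := n) lam v i m :=
  Measurable.tsum fun j =>
    (measurable_const.mul (measurable_gramInvForm lam i j)).mul (measurable_gramInvForm lam j m)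

end Measurability

theorem offdiag_C_mean_zero_general
    {Ω : Type*} [MeasurableSpace Ω] (μ : Measure Ω) [IsProbabilityMeasure μ]
    {k : ℕ} (ξ : ℕ × Fin k → Ω → ℝ) (hmeas : ∀ p, Measurable (ξ p))
    (hiid : iIndepFun ξ μ)
    (hgauss : ∀ p, Measure.map (ξ p) μ = gaussianReal 0 1)
    (lam : ℕ → ℝ)
    (G : Ω → Matrix (Fin k) (Fin k) ℝ)
    (hG : ∀ ω, G ω = ∑' j : ℕ,
      lam j • Matrix.vecMulVec (fun i => ξ (j, i) ω) (fun i => ξ (j, i) ω))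
    (Mc : ℕ → ℕ → Ω → ℝ)
    (hMc : ∀ l m ω, Mc l m ω =
      (fun i' => ξ (l, i') ω) ⬝ᵥ ((G ω)⁻¹ *ᵥ fun i' => ξ (m, i') ω))
    (C : ℕ → ℕ → Ω → ℝ)
    (hC : ∀ i n ω, C i n ω = ∑' j : ℕ, lam j ^ 2 * Mc i j ω * Mc j n ω)
    (i n : ℕ) (hin : i ≠ n) :
    ∫ ω, C i n ω ∂μ = 0 := by
  set s : ℕ → ℝ := fun j => if j = i then -1 else 1
  have hs : ∀ j, s j * s j = 1 := fun j => by by_cases h : j = i <;> simp [s, h]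
  have hsign : s i * s n = -1 := by simp [s, hin.symm]
  have hG_eq : ∀ ω, weightedGram lam (fun p => ξ p ω) = G ω := fun ω => (hG ω).symm
  have hC_eq : C i n = fun ω => gramCross lam (fun p => ξ p ω) i n := by
    funext ω
    simp only [hC, gramCross, gramInvForm, hG_eq, hMc]
    rfl
  have hlaw : μ.map (scaleRows s ∘ fun ω p => ξ p ω) = μ.map fun ω p => ξ p ω :=
    hiid.map_comp_eq_map hmeas (f := fun p x => s p.1 * x) (fun _ => measurable_const_mul _)
      fun p => by
        rw [← Measure.map_map (measurable_const_mul _) (hmeas p), hgauss,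
          gaussianReal_map_const_mul_of_mul_self_eq_one (hs p.1)]
  rw [hC_eq]
  exact integral_comp_eq_zero_of_map_eq_of_odd (measurable_pi_lambda _ hmeas)
    (measurable_scaleRows s) (measurable_gramCross lam i n) hlaw
    fun v => by rw [gramCross_scaleRows hs, hsign, neg_one_mul]

/-- In the Gaussian setting of Statement 11, for fixed `i ≠ n`
the quantity `C_{i,n} = ∑ⱼ λⱼ² M_{i,j} M_{j,n}` has expectation zero. -/
theorem offdiag_C_mean_zero
    {Ω : Type*} [MeasurableSpace Ω] (μ : Measure Ω) [IsProbabilityMeasure μ]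
    {k : ℕ} (ξ : ℕ × Fin k → Ω → ℝ) (hmeas : ∀ p, Measurable (ξ p))
    (hiid : iIndepFun ξ μ)
    (hgauss : ∀ p, Measure.map (ξ p) μ = gaussianReal 0 1)
    (lam : ℕ → ℝ) (hpos : ∀ j, 0 < lam j) (hsum : Summable lam)
    (G : Ω → Matrix (Fin k) (Fin k) ℝ)
    (hG : ∀ ω, G ω = ∑' j : ℕ,
      lam j • Matrix.vecMulVec (fun i => ξ (j, i) ω) (fun i => ξ (j, i) ω))
    (hGinv : ∀ᵐ ω ∂μ, IsUnit (G ω).det)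
    (Mc : ℕ → ℕ → Ω → ℝ)
    (hMc : ∀ l m ω, Mc l m ω =
      (fun i' => ξ (l, i') ω) ⬝ᵥ ((G ω)⁻¹ *ᵥ fun i' => ξ (m, i') ω))
    (C : ℕ → ℕ → Ω → ℝ)
    (hC : ∀ i n ω, C i n ω = ∑' j : ℕ, lam j ^ 2 * Mc i j ω * Mc j n ω)
    (i n : ℕ) (hin : i ≠ n) (hint : Integrable (C i n) μ) :
    ∫ ω, C i n ω ∂μ = 0 :=
  offdiag_C_mean_zero_general μ ξ hmeas hiid hgauss lam G hG Mc hMc C hC i n hin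
end
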